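/- In the IRL1 setting with level-set boundedness, there exist disjoint index sets I* and A* with I* ∪ A* = {1, …, n} and an integer k̄ such that for every k > k̄, {i : x_i^k ≠ 0} = I* and {i : x_i^k = 0} = A*; i.e., the support of the iterates is eventually constant. -/

import Mathlib

open Filter Topology

/-- The weight function `w(t, s) = p(|t| + s)^(p-1)`. -/
noncomputable def wfun (p t s : ℝ) : ℝ := p * (|t| + s) ^ (p - 1)

/-- The IRL1 setting (Algorithm 2.1 of the paper): fixed data `p ∈ (0,1)`, `λ > 0`,
`μ ∈ (0,1)`, a differentiable `f` with `Lf`-Lipschitz gradient (`Lf ≥ 0`), iterates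
`x^k`, positive parameters `ε^k` with `ε^{k+1} ≤ μ ε^k` componentwise, and for each `k`
a differentiable model `Q_k` with `∇Q_k(x^k) = ∇f(x^k)`, `M`-strongly convex with
`M > Lf/2` (strong convexity meaning `z ↦ Q_k z - (M/2)‖z‖²` is convex), `∇Q_k`
`L`-Lipschitz, such that `x^{k+1}` is a global minimizer of
`G(·; x^k, ε^k) = Q_k(·) + λ Σᵢ w(xᵢ^k, εᵢ^k)|·ᵢ|`. -/
structure IRL1 (n : ℕ) where
  p : ℝ
  lam : ℝ
  mu : ℝ
  Lf : ℝ
  M : ℝ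
  L : ℝ
  f : EuclideanSpace ℝ (Fin n) → ℝ
  x : ℕ → EuclideanSpace ℝ (Fin n)
  eps : ℕ → Fin n → ℝ
  Q : ℕ → EuclideanSpace ℝ (Fin n) → ℝ
  hp0 : 0 < p
  hp1 : p < 1
  hlam : 0 < lam
  hmu0 : 0 < mu
  hmu1 : mu < 1
  hLf : 0 ≤ Lf
  hM : Lf / 2 < M
  hf_diff : Differentiable ℝ f
  hf_lip : ∀ a b, ‖gradient f a - gradient f b‖ ≤ Lf * ‖a - b‖
  heps_pos : ∀ k i, 0 < eps k i
  heps_dec : ∀ k i, eps (k + 1) i ≤ mu * eps k i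
  hQ_diff : ∀ k, Differentiable ℝ (Q k)
  hQ_grad : ∀ k, gradient (Q k) (x k) = gradient f (x k)
  hQ_sconv : ∀ k, ConvexOn ℝ Set.univ (fun z => Q k z - M / 2 * ‖z‖ ^ 2)
  hQ_lip : ∀ k a b, ‖gradient (Q k) a - gradient (Q k) b‖ ≤ L * ‖a - b‖
  hmin : ∀ k, ∀ z : EuclideanSpace ℝ (Fin n),
    Q k (x (k + 1)) + lam * ∑ i, wfun p (x k i) (eps k i) * |x (k + 1) i|
      ≤ Q k z + lam * ∑ i, wfun p (x k i) (eps k i) * |z i|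

/-- The smoothed objective `F(x, ε) = f(x) + λ Σᵢ (|xᵢ| + εᵢ)^p`. -/
noncomputable def IRL1.Feps {n : ℕ} (S : IRL1 n)
    (z : EuclideanSpace ℝ (Fin n)) (e : Fin n → ℝ) : ℝ :=
  S.f z + S.lam * ∑ i, (|z i| + e i) ^ S.p

/-- The objective `F(x) = f(x) + λ Σᵢ |xᵢ|^p`. -/
noncomputable def IRL1.Fobj {n : ℕ} (S : IRL1 n) (z : EuclideanSpace ℝ (Fin n)) : ℝ :=
  S.f z + S.lam * ∑ i, |z i| ^ S.p

/-- The subproblem objective `G(z; x^k, ε^k)`. -/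
noncomputable def IRL1.G {n : ℕ} (S : IRL1 n) (k : ℕ)
    (z : EuclideanSpace ℝ (Fin n)) : ℝ :=
  S.Q k z + S.lam * ∑ i, wfun S.p (S.x k i) (S.eps k i) * |z i|

/-- The level set `{x : F(x) ≤ F(x⁰, ε⁰)}` is bounded. -/
def IRL1.LevelBounded {n : ℕ} (S : IRL1 n) : Prop :=
  Bornology.IsBounded {z : EuclideanSpace ℝ (Fin n) | S.Fobj z ≤ S.Feps (S.x 0) (S.eps 0)}

/-!
Every step costs a fixed multiple of its squared length: the model `Q_k` contributes `M/2 ‖d‖²`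
by strong convexity, the minimality of `x^{k+1}` for the strongly convex `G(·; x^k, ε^k)`
another `M/2 ‖d‖²`, the descent lemma for `f` loses at most `Lf/2 ‖d‖²`, and concavity of
`t ↦ t^p` lets the reweighted ℓ¹ term majorize the smoothed penalty. Since `F(x^k, ε^k)` is
bounded below on the bounded level set, the steps `x^{k+1} - x^k` tend to `0`.

Fermat's rule along the `i`-th coordinate gives `λ w(x_i^k, ε_i^k) ≤ ‖∇Q_k(x^{k+1})‖` whenever
`x_i^{k+1} ≠ 0`, and this gradient is bounded, so such a coordinate has `|x_i^k| + ε_i^k ≥ δ` for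
a fixed `δ > 0`. As `ε^k → 0` and the steps vanish, nonzero coordinates eventually satisfy
`|x_i^k| ≥ δ/2`, and a step shorter than `δ/2` can then neither create nor destroy a nonzero
coordinate.
-/

section StrongConvexity

variable {E : Type*} [NormedAddCommGroup E] [NormedSpace ℝ E]

lemma StrongConvexOn.add_half_mul_sq_le_of_forall_le {G : E → ℝ} {M : ℝ}
    (hG : StrongConvexOn Set.univ M G) {x₀ : E} (hmin : ∀ z, G x₀ ≤ G z) (z : E) :
    G x₀ + M / 2 * ‖z - x₀‖ ^ 2 ≤ G z := by
  have hsmall : ∀ t ∈ Set.Ioo (0 : ℝ) 1, (1 - t) * (M / 2 * ‖z - x₀‖ ^ 2) ≤ G z - G x₀ := by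
    rintro t ⟨ht0, ht1⟩
    have hconv := hG.2 (Set.mem_univ z) (Set.mem_univ x₀) ht0.le (sub_nonneg.2 ht1.le)
      (add_sub_cancel t 1)
    have := (hmin _).trans hconv
    simp only [smul_eq_mul] at this
    exact le_of_mul_le_mul_left (by linear_combination this) ht0
  have hlim : Tendsto (fun t : ℝ => (1 - t) * (M / 2 * ‖z - x₀‖ ^ 2)) (𝓝[>] 0)
      (𝓝 (M / 2 * ‖z - x₀‖ ^ 2)) := by
    have hcont : Continuous fun t : ℝ => (1 - t) * (M / 2 * ‖z - x₀‖ ^ 2) := by fun_prop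
    exact (hcont.tendsto' 0 _ (by simp)).mono_left nhdsWithin_le_nhds
  have := le_of_tendsto hlim (Filter.mem_of_superset (Ioo_mem_nhdsGT one_pos) hsmall)
  linarith

end StrongConvexity

section Gradient

variable {E : Type*} [NormedAddCommGroup E] [InnerProductSpace ℝ E] [CompleteSpace E]

lemma hasDerivAt_comp_add_smul {f : E → ℝ} {a d : E} {t : ℝ}
    (hf : DifferentiableAt ℝ f (a + t • d)) :
    HasDerivAt (fun s : ℝ => f (a + s • d)) (inner ℝ (gradient f (a + t • d)) d) t := by
  have hline : HasDerivAt (fun s : ℝ => a + s • d) d t := by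
    simpa using ((hasDerivAt_id t).smul_const d).const_add a
  exact hf.hasGradientAt.hasFDerivAt.comp_hasDerivAt t hline

lemma le_add_inner_gradient_add_sq {f : E → ℝ} {L : ℝ} (hf : Differentiable ℝ f)
    (hlip : ∀ a b, ‖gradient f a - gradient f b‖ ≤ L * ‖a - b‖) (a b : E) :
    f b ≤ f a + inner ℝ (gradient f a) (b - a) + L / 2 * ‖b - a‖ ^ 2 := by
  set d := b - a
  set φ : ℝ → ℝ := fun t =>
    f (a + t • d) - t * inner ℝ (gradient f a) d - L / 2 * ‖d‖ ^ 2 * t ^ 2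
  have hφ : ∀ t, HasDerivAt φ
      (inner ℝ (gradient f (a + t • d) - gradient f a) d - L * ‖d‖ ^ 2 * t) t := by
    intro t
    have := ((hasDerivAt_comp_add_smul (hf (a + t • d))).sub ((hasDerivAt_id t).mul_const
      (inner ℝ (gradient f a) d))).sub ((hasDerivAt_pow 2 t).const_mul (L / 2 * ‖d‖ ^ 2))
    refine this.congr_deriv ?_
    rw [inner_sub_left]; push_cast; ring
  have hanti : AntitoneOn φ (Set.Ici 0) := by
    refine antitoneOn_of_deriv_nonpos (convex_Ici 0)
      (fun t _ => (hφ t).continuousAt.continuousWithinAt)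
      (fun t _ => (hφ t).differentiableAt.differentiableWithinAt) fun t ht => ?_
    rw [interior_Ici] at ht
    rw [(hφ t).deriv, sub_nonpos]
    calc inner ℝ (gradient f (a + t • d) - gradient f a) d
        ≤ ‖gradient f (a + t • d) - gradient f a‖ * ‖d‖ := real_inner_le_norm _ _
      _ ≤ L * ‖t • d‖ * ‖d‖ := by
          gcongr; simpa using hlip (a + t • d) a
      _ = L * ‖d‖ ^ 2 * t := by rw [norm_smul, Real.norm_of_nonneg ht.le]; ring
  have := hanti Set.self_mem_Ici (Set.mem_Ici.2 zero_le_one) zero_le_one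
  simp only [φ, d, zero_smul, add_zero, one_smul, add_sub_cancel] at this
  linarith

lemma add_inner_gradient_add_sq_le {Q : E → ℝ} {M : ℝ}
    (hs : ConvexOn ℝ Set.univ fun z => Q z - M / 2 * ‖z‖ ^ 2) {a : E}
    (hQ : DifferentiableAt ℝ Q a) (b : E) :
    Q a + inner ℝ (gradient Q a) (b - a) + M / 2 * ‖b - a‖ ^ 2 ≤ Q b := by
  set d := b - a
  set φ : ℝ → ℝ := fun t => Q (a + t • d) - M / 2 * ‖a + t • d‖ ^ 2
  have hφ : ConvexOn ℝ Set.univ φ := by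
    simpa [φ, Function.comp_def, AffineMap.lineMap_apply_module', add_comm] using
      hs.comp_affineMap (AffineMap.lineMap a b)
  have hφ' : HasDerivAt φ (inner ℝ (gradient Q a) d - M / 2 * (2 * inner ℝ a d)) 0 := by
    have hline : HasDerivAt (fun t : ℝ => a + t • d) d 0 := by
      simpa using ((hasDerivAt_id (0 : ℝ)).smul_const d).const_add a
    have := (hasDerivAt_comp_add_smul (f := Q) (d := d) (t := 0) (by simpa using hQ)).sub
      (hline.norm_sq.const_mul (M / 2))
    exact this.congr_deriv (by simp)
  have hslope := hφ.le_slope_of_hasDerivAt (Set.mem_univ 0) (Set.mem_univ 1) one_pos hφ'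
  have hb : ‖b‖ ^ 2 = ‖a‖ ^ 2 + 2 * inner ℝ a d + ‖d‖ ^ 2 := by
    rw [← norm_add_sq_real, add_sub_cancel]
  have hab : a + d = b := add_sub_cancel a b
  simp only [slope_def_field, φ, zero_smul, add_zero, one_smul, sub_zero, div_one, hab, hb]
    at hslope
  linarith

end Gradient

lemma rpow_le_rpow_add_mul_sub {p a y : ℝ} (hp0 : 0 ≤ p) (hp1 : p ≤ 1) (ha : 0 < a) (hy : 0 ≤ y) :
    y ^ p ≤ a ^ p + p * a ^ (p - 1) * (y - a) := by
  have hgm := Real.geom_mean_le_arith_mean2_weighted hp0 (sub_nonneg.2 hp1) hy ha.le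
    (add_sub_cancel p 1)
  have hinv : a ^ (1 - p) * a ^ (p - 1) = 1 := by
    rw [← Real.rpow_add ha]; simp
  have hap : a ^ (p - 1) * a = a ^ p := by rw [Real.rpow_sub_one ha.ne']; field_simp
  calc y ^ p = y ^ p * a ^ (1 - p) * a ^ (p - 1) := by rw [mul_assoc, hinv, mul_one]
    _ ≤ (p * y + (1 - p) * a) * a ^ (p - 1) := by gcongr
    _ = a ^ p + p * a ^ (p - 1) * (y - a) := by rw [← hap]; ring

lemma rpow_inv_le_of_mul_rpow_le {q a s C : ℝ} (hq : q < 0) (ha : 0 < a) (hs : 0 < s)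
    (h : a * s ^ q ≤ C) : (C / a) ^ q⁻¹ ≤ s := by
  have hsq : s ^ q ≤ C / a := by rwa [le_div_iff₀' ha]
  calc (C / a) ^ q⁻¹ ≤ (s ^ q) ^ q⁻¹ :=
        Real.rpow_le_rpow_of_nonpos (Real.rpow_pos_of_pos hs q) hsq (inv_nonpos.2 hq.le)
    _ = s := Real.rpow_rpow_inv hs.le hq.ne

lemma abs_add_rpow_le {p e : ℝ} (hp0 : 0 ≤ p) (hp1 : p ≤ 1) (he : 0 < e) (s t : ℝ) :
    (|t| + e) ^ p ≤ (|s| + e) ^ p + (wfun p s e * |t| - wfun p s e * |s|) := by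
  have := rpow_le_rpow_add_mul_sub hp0 hp1 (by positivity : 0 < |s| + e)
    (by positivity : 0 ≤ |t| + e)
  rw [wfun]
  linear_combination this

lemma ne_zero_iff_ne_zero_of_abs_sub_lt {a b δ : ℝ} (ha : a ≠ 0 → δ ≤ |a|) (hb : b ≠ 0 → δ ≤ |b|)
    (hab : |a - b| < δ) : a ≠ 0 ↔ b ≠ 0 := by
  constructor
  · rintro ha0 rfl
    exact absurd (ha ha0) (by simpa using hab)
  · rintro hb0 rfl
    exact absurd (hb hb0) (by simpa using hab)

lemma tendsto_zero_of_mul_sq_le_sub_succ {a b : ℕ → ℝ} {c B : ℝ} (hc : 0 < c)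
    (hB : ∀ k, B ≤ a k) (h : ∀ k, c * b k ^ 2 ≤ a k - a (k + 1)) :
    Tendsto b atTop (𝓝 0) := by
  have hsum : Summable fun k => c * b k ^ 2 :=
    summable_of_sum_range_le (c := a 0 - B) (fun k => by positivity) fun m =>
      (Finset.sum_le_sum fun k _ => h k).trans (by rw [Finset.sum_range_sub']; linarith [hB m])
  have hsq : Tendsto (fun k => b k ^ 2) atTop (𝓝 0) := by
    simpa [hc.ne'] using hsum.tendsto_atTop_zero.const_mul c⁻¹
  rw [tendsto_zero_iff_abs_tendsto_zero]
  simpa [Function.comp_def, Real.sqrt_sq_eq_abs] using hsq.sqrt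

section EuclideanSpace

variable {ι : Type*} [Fintype ι]

lemma abs_apply_sub_apply_le_norm_sub (u v : EuclideanSpace ℝ ι) (i : ι) :
    |u i - v i| ≤ ‖u - v‖ :=
  PiLp.norm_apply_le (u - v) i

lemma convexOn_sum_mul_abs {c : ι → ℝ} (hc : ∀ j, 0 ≤ c j) :
    ConvexOn ℝ Set.univ fun z : EuclideanSpace ℝ ι => ∑ j, c j * |z j| := by
  have hterm : ∀ j, ConvexOn ℝ Set.univ fun z : EuclideanSpace ℝ ι => c j * |z j| := fun j => by
    simpa [Function.comp_def] using ((convexOn_norm convex_univ).comp_linearMap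
      (EuclideanSpace.proj j : EuclideanSpace ℝ ι →L[ℝ] ℝ).toLinearMap).smul (hc j)
  have := Finset.sum_induction (s := Finset.univ) (fun j (z : EuclideanSpace ℝ ι) => c j * |z j|)
    (ConvexOn ℝ Set.univ) (fun _ _ => ConvexOn.add) (convexOn_const 0 convex_univ)
    (fun j _ => hterm j)
  simpa [Finset.sum_fn] using this

variable [DecidableEq ι]

lemma sum_mul_abs_add_single (c : ι → ℝ) (u : EuclideanSpace ℝ ι) (i : ι) (t : ℝ) :
    ∑ j, c j * |(u + t • EuclideanSpace.single i (1 : ℝ) : EuclideanSpace ℝ ι) j|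
      = ∑ j, c j * |u j| + c i * (|u i + t| - |u i|) := by
  rw [← sub_eq_iff_eq_add', ← Finset.sum_sub_distrib,
    Finset.sum_eq_single i (fun j _ hj => by simp [hj]) (by simp)]
  simp [mul_sub]

/-- Fermat's rule for `t ↦ Q (u + t • eᵢ) + cᵢ |uᵢ + t|`, which is differentiable at `0` because
`uᵢ ≠ 0`. -/
lemma abs_eq_abs_gradient_apply_of_forall_le {Q : EuclideanSpace ℝ ι → ℝ}
    {u : EuclideanSpace ℝ ι} (hQ : DifferentiableAt ℝ Q u) (c : ι → ℝ)
    (hmin : ∀ z, Q u + ∑ j, c j * |u j| ≤ Q z + ∑ j, c j * |z j|) {i : ι} (hi : u i ≠ 0) :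
    |c i| = |gradient Q u i| := by
  set e := EuclideanSpace.single i (1 : ℝ)
  set φ : ℝ → ℝ := fun t => Q (u + t • e) + c i * |u i + t|
  have hφmin : IsLocalMin φ 0 := Filter.Eventually.of_forall fun t => by
    have := hmin (u + t • e)
    rw [sum_mul_abs_add_single] at this
    simp only [φ, zero_smul, add_zero]
    linarith
  have hφ : HasDerivAt φ (gradient Q u i + c i * SignType.sign (u i)) 0 := by
    have hQ' := hasDerivAt_comp_add_smul (f := Q) (a := u) (d := e) (t := 0) (by simpa using hQ)
    have habs := ((add_zero (u i) ▸ hasDerivAt_abs hi).comp_const_add (u i) 0).const_mul (c i)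
    refine (hQ'.add (by simpa using habs)).congr_deriv ?_
    simp only [zero_smul, add_zero, e, EuclideanSpace.inner_single_right, one_mul, conj_trivial]
  have hzero := hφmin.hasDerivAt_eq_zero hφ
  rw [eq_neg_of_add_eq_zero_left hzero, abs_neg, abs_mul]
  rcases hi.lt_or_gt with hneg | hpos <;> simp [*]

end EuclideanSpace

namespace IRL1

variable {n : ℕ} (S : IRL1 n)

lemma abs_add_eps_pos (k : ℕ) (i : Fin n) : 0 < |S.x k i| + S.eps k i :=
  add_pos_of_nonneg_of_pos (abs_nonneg _) (S.heps_pos k i)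

lemma wfun_pos (k : ℕ) (i : Fin n) : 0 < wfun S.p (S.x k i) (S.eps k i) :=
  mul_pos S.hp0 (Real.rpow_pos_of_pos (S.abs_add_eps_pos k i) _)

lemma G_eq (k : ℕ) (z : EuclideanSpace ℝ (Fin n)) :
    S.G k z = S.Q k z + ∑ j, S.lam * wfun S.p (S.x k j) (S.eps k j) * |z j| := by
  simp only [G, Finset.mul_sum, mul_assoc]

lemma G_succ_le (k : ℕ) (z : EuclideanSpace ℝ (Fin n)) : S.G k (S.x (k + 1)) ≤ S.G k z :=
  S.hmin k z

lemma strongConvexOn_G (k : ℕ) : StrongConvexOn Set.univ S.M (S.G k) := by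
  rw [strongConvexOn_iff_convex]
  have hpen := convexOn_sum_mul_abs fun j => (mul_pos S.hlam (S.wfun_pos k j)).le
  refine ((S.hQ_sconv k).add hpen).congr fun z _ => ?_
  simp only [G_eq, Pi.add_apply]
  ring

lemma Feps_succ_add_le (k : ℕ) :
    S.Feps (S.x (k + 1)) (S.eps (k + 1)) + (S.M - S.Lf / 2) * ‖S.x (k + 1) - S.x k‖ ^ 2
      ≤ S.Feps (S.x k) (S.eps k) := by
  set x := S.x k
  set y := S.x (k + 1)
  set w := fun j => wfun S.p (x j) (S.eps k j)
  have hpen : ∑ j, (|y j| + S.eps k j) ^ S.p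
      ≤ ∑ j, (|x j| + S.eps k j) ^ S.p + (∑ j, w j * |y j| - ∑ j, w j * |x j|) := by
    rw [← Finset.sum_sub_distrib, ← Finset.sum_add_distrib]
    exact Finset.sum_le_sum fun j _ =>
      abs_add_rpow_le S.hp0.le S.hp1.le (S.heps_pos k j) (x j) (y j)
  have heps : ∑ j, (|y j| + S.eps (k + 1) j) ^ S.p ≤ ∑ j, (|y j| + S.eps k j) ^ S.p := by
    refine Finset.sum_le_sum fun j _ => Real.rpow_le_rpow
      (add_nonneg (abs_nonneg _) (S.heps_pos (k + 1) j).le)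
      ?_ S.hp0.le
    nlinarith [S.heps_dec k j, S.heps_pos k j, S.hmu1]
  have hG := (S.strongConvexOn_G k).add_half_mul_sq_le_of_forall_le (S.G_succ_le k) x
  have hdesc := le_add_inner_gradient_add_sq S.hf_diff S.hf_lip x y
  have htan := add_inner_gradient_add_sq_le (S.hQ_sconv k) (S.hQ_diff k x) y
  rw [S.hQ_grad k] at htan
  rw [norm_sub_rev] at hG
  have hpen' := mul_le_mul_of_nonneg_left hpen S.hlam.le
  have heps' := mul_le_mul_of_nonneg_left heps S.hlam.le
  simp only [G, Feps] at hG ⊢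
  linear_combination hdesc + htan + hG + hpen' + heps'

lemma Feps_le_Feps_zero (k : ℕ) : S.Feps (S.x k) (S.eps k) ≤ S.Feps (S.x 0) (S.eps 0) := by
  refine antitone_nat_of_succ_le (f := fun k => S.Feps (S.x k) (S.eps k))
    (fun k => le_of_add_le_of_nonneg_left (S.Feps_succ_add_le k) ?_) (Nat.zero_le k)
  exact mul_nonneg (by linarith [S.hM]) (sq_nonneg _)

lemma Fobj_le_Feps (z : EuclideanSpace ℝ (Fin n)) {e : Fin n → ℝ} (he : ∀ i, 0 ≤ e i) :
    S.Fobj z ≤ S.Feps z e := by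
  refine add_le_add le_rfl (mul_le_mul_of_nonneg_left (Finset.sum_le_sum fun i _ => ?_) S.hlam.le)
  exact Real.rpow_le_rpow (abs_nonneg _) (le_add_of_nonneg_right (he i)) S.hp0.le

lemma f_le_Feps (z : EuclideanSpace ℝ (Fin n)) {e : Fin n → ℝ} (he : ∀ i, 0 ≤ e i) :
    S.f z ≤ S.Feps z e :=
  le_add_of_nonneg_right <| mul_nonneg S.hlam.le <| Finset.sum_nonneg fun i _ =>
    Real.rpow_nonneg (add_nonneg (abs_nonneg _) (he i)) _

lemma exists_norm_le (hbdd : S.LevelBounded) : ∃ R, ∀ k, ‖S.x k‖ ≤ R := by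
  obtain ⟨R, hR⟩ := hbdd.exists_norm_le
  exact ⟨R, fun k => hR _ <|
    (S.Fobj_le_Feps _ fun i => (S.heps_pos k i).le).trans (S.Feps_le_Feps_zero k)⟩

lemma exists_le_Feps (hbdd : S.LevelBounded) : ∃ B, ∀ k, B ≤ S.Feps (S.x k) (S.eps k) := by
  obtain ⟨R, hR⟩ := S.exists_norm_le hbdd
  obtain ⟨B, hB⟩ := (isCompact_closedBall (0 : EuclideanSpace ℝ (Fin n)) R).bddBelow_image
    S.hf_diff.continuous.continuousOn
  refine ⟨B, fun k => (hB ⟨S.x k, ?_, rfl⟩).trans (S.f_le_Feps _ fun i => (S.heps_pos k i).le)⟩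
  simpa using hR k

lemma tendsto_norm_sub (hbdd : S.LevelBounded) :
    Tendsto (fun k => ‖S.x (k + 1) - S.x k‖) atTop (𝓝 0) := by
  obtain ⟨B, hB⟩ := S.exists_le_Feps hbdd
  exact tendsto_zero_of_mul_sq_le_sub_succ (c := S.M - S.Lf / 2) (by linarith [S.hM]) hB
    fun k => by linarith [S.Feps_succ_add_le k]

lemma eps_le_pow_mul (k : ℕ) (i : Fin n) : S.eps k i ≤ S.mu ^ k * S.eps 0 i := by
  induction k with
  | zero => simp
  | succ k ih =>
    calc S.eps (k + 1) i ≤ S.mu * S.eps k i := S.heps_dec k i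
      _ ≤ S.mu * (S.mu ^ k * S.eps 0 i) := mul_le_mul_of_nonneg_left ih S.hmu0.le
      _ = S.mu ^ (k + 1) * S.eps 0 i := by ring

lemma tendsto_eps (i : Fin n) : Tendsto (fun k => S.eps k i) atTop (𝓝 0) := by
  have hpow : Tendsto (fun k => S.mu ^ k * S.eps 0 i) atTop (𝓝 0) := by
    simpa using (tendsto_pow_atTop_nhds_zero_of_lt_one S.hmu0.le S.hmu1).mul_const (S.eps 0 i)
  exact tendsto_of_tendsto_of_tendsto_of_le_of_le tendsto_const_nhds hpow
    (fun k => (S.heps_pos k i).le) (fun k => S.eps_le_pow_mul k i)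

lemma exists_norm_gradient_le (hbdd : S.LevelBounded) :
    ∃ C, ∀ k, ‖gradient (S.Q k) (S.x (k + 1))‖ ≤ C := by
  obtain ⟨R, hR⟩ := S.exists_norm_le hbdd
  refine ⟨|S.L| * (R + R) + S.Lf * R + ‖gradient S.f 0‖, fun k => ?_⟩
  have hsplit : gradient (S.Q k) (S.x (k + 1)) = (gradient (S.Q k) (S.x (k + 1))
      - gradient (S.Q k) (S.x k)) + (gradient S.f (S.x k) - gradient S.f 0) + gradient S.f 0 := by
    rw [S.hQ_grad k]; abel
  have hQ : ‖gradient (S.Q k) (S.x (k + 1)) - gradient (S.Q k) (S.x k)‖ ≤ |S.L| * (R + R) :=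
    calc _ ≤ S.L * ‖S.x (k + 1) - S.x k‖ := S.hQ_lip k _ _
      _ ≤ |S.L| * (‖S.x (k + 1)‖ + ‖S.x k‖) :=
        mul_le_mul (le_abs_self _) (norm_sub_le _ _) (norm_nonneg _) (abs_nonneg _)
      _ ≤ |S.L| * (R + R) := by gcongr <;> apply hR
  have hf : ‖gradient S.f (S.x k) - gradient S.f 0‖ ≤ S.Lf * R :=
    calc _ ≤ S.Lf * ‖S.x k - 0‖ := S.hf_lip _ _
      _ ≤ S.Lf * R := by rw [sub_zero]; exact mul_le_mul_of_nonneg_left (hR k) S.hLf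
  rw [hsplit]
  exact norm_add₃_le.trans (add_le_add_three hQ hf le_rfl)

lemma lam_mul_wfun_le_norm_gradient (k : ℕ) {i : Fin n} (hi : S.x (k + 1) i ≠ 0) :
    S.lam * wfun S.p (S.x k i) (S.eps k i) ≤ ‖gradient (S.Q k) (S.x (k + 1))‖ := by
  have habs := abs_eq_abs_gradient_apply_of_forall_le (S.hQ_diff k _) _
    (fun z => by simpa only [G_eq] using S.G_succ_le k z) hi
  calc _ ≤ |S.lam * wfun S.p (S.x k i) (S.eps k i)| := le_abs_self _
    _ = ‖gradient (S.Q k) (S.x (k + 1)) i‖ := habs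
    _ ≤ ‖gradient (S.Q k) (S.x (k + 1))‖ := PiLp.norm_apply_le _ i

lemma exists_pos_le_abs_add_eps (hbdd : S.LevelBounded) :
    ∃ δ > 0, ∀ k i, S.x (k + 1) i ≠ 0 → δ ≤ |S.x k i| + S.eps k i := by
  obtain ⟨C, hC⟩ := S.exists_norm_gradient_le hbdd
  have hlp : 0 < S.lam * S.p := mul_pos S.hlam S.hp0
  refine ⟨(max C 1 / (S.lam * S.p)) ^ (S.p - 1)⁻¹,
    Real.rpow_pos_of_pos (div_pos (by positivity) hlp) _, fun k i hi => ?_⟩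
  refine rpow_inv_le_of_mul_rpow_le (by linarith [S.hp1]) hlp (S.abs_add_eps_pos k i) ?_
  calc S.lam * S.p * (|S.x k i| + S.eps k i) ^ (S.p - 1)
      = S.lam * wfun S.p (S.x k i) (S.eps k i) := by rw [wfun, mul_assoc]
    _ ≤ C := (S.lam_mul_wfun_le_norm_gradient k hi).trans (hC k)
    _ ≤ max C 1 := le_max_left C 1

lemma exists_pos_eventually_le_abs (hbdd : S.LevelBounded) :
    ∃ δ > 0, ∀ᶠ k in atTop, ∀ i, S.x k i ≠ 0 → δ ≤ |S.x k i| := by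
  obtain ⟨δ, hδ, hle⟩ := S.exists_pos_le_abs_add_eps hbdd
  have heps : ∀ᶠ k in atTop, ∀ i, S.eps k i < δ / 4 :=
    eventually_all.2 fun i => (S.tendsto_eps i).eventually (gt_mem_nhds (by positivity))
  have hstep : ∀ᶠ k in atTop, ‖S.x (k + 1) - S.x k‖ < δ / 4 :=
    (S.tendsto_norm_sub hbdd).eventually (gt_mem_nhds (by positivity))
  refine ⟨δ / 2, by positivity, ?_⟩
  rw [← map_add_atTop_eq_nat 1, eventually_map]
  filter_upwards [heps, hstep] with k hk hk' i hi
  have hprev := hle k i hi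
  have hcoord := (abs_apply_sub_apply_le_norm_sub (S.x (k + 1)) (S.x k) i).trans_lt hk'
  have htri := abs_sub_abs_le_abs_sub (S.x k i) (S.x (k + 1) i)
  rw [abs_sub_comm] at htri
  linarith [hk i]

lemma eventuallyConst_support (hbdd : S.LevelBounded) :
    EventuallyConst (fun k => {i | S.x k i ≠ 0}) atTop := by
  obtain ⟨δ, hδ, hle⟩ := S.exists_pos_eventually_le_abs hbdd
  have hstep : ∀ᶠ k in atTop, ‖S.x (k + 1) - S.x k‖ < δ :=
    (S.tendsto_norm_sub hbdd).eventually (gt_mem_nhds hδ)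
  rw [eventuallyConst_atTop_nat]
  obtain ⟨K, hK⟩ := eventually_atTop.1 (hle.and ((tendsto_add_atTop_nat 1).eventually hle)
    |>.and hstep)
  refine ⟨K, fun k hk => Set.ext fun i => ?_⟩
  obtain ⟨⟨hk₀, hk₁⟩, hk'⟩ := hK k hk
  exact ne_zero_iff_ne_zero_of_abs_sub_lt (hk₁ i) (hk₀ i)
    ((abs_apply_sub_apply_le_norm_sub _ _ i).trans_lt hk')

end IRL1

/-- In the IRL1 setting with bounded level set, there are disjoint
index sets `I*` and `A*` with `I* ∪ A* = {1,…,n}` and `k̄` such that for all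
`k > k̄`, `{i : x_i^k ≠ 0} = I*` and `{i : x_i^k = 0} = A*`. -/
theorem stmt8 {n : ℕ} (S : IRL1 n) (hbdd : S.LevelBounded) :
    ∃ (Istar Astar : Set (Fin n)), Disjoint Istar Astar ∧
      Istar ∪ Astar = Set.univ ∧
      ∃ kbar : ℕ, ∀ k > kbar,
        {i : Fin n | S.x k i ≠ 0} = Istar ∧ {i : Fin n | S.x k i = 0} = Astar := by
  obtain ⟨I, hI⟩ := (S.eventuallyConst_support hbdd).eventuallyEq_const
  obtain ⟨kbar, hkbar⟩ := eventually_atTop.1 hI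
  refine ⟨I, Iᶜ, disjoint_compl_right, Set.union_compl_self I, kbar, fun k hk => ?_⟩
  have hsupp : {i | S.x k i ≠ 0} = I := hkbar k hk.le
  refine ⟨hsupp, ?_⟩
  rw [← hsupp, Set.compl_ofPred]
  simp only [not_not]
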